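/- arXiv:1210.7389 — 3 statements merged into one kernel-verified Lean document; each statement's English description precedes it below -/
import Mathlib

section
/- Let V and H be real Hilbert spaces with V continuously embedded in H, let u_0, ..., u_M ∈ V, and let {φ_1, ..., φ_d} be H-orthonormal eigenvectors of K v = (1/(M+1)) Σ_{ℓ=0}^{M} ⟨u_ℓ, v⟩_H u_ℓ with eigenvalues λ_j, spanning span{u_0,...,u_M}. Then for r ≤ d, (1/(M+1)) Σ_{ℓ=0}^{M} ‖u_ℓ − Σ_{j=1}^{r} ⟨u_ℓ, φ_j⟩_H φ_j‖_V² = Σ_{j=r+1}^{d} λ_j ‖φ_j‖_V². -/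
open scoped RealInnerProductSpace BigOperators

/-!
Since `u ℓ` lies in the span of the `φ j`, which are `H`-orthonormal, it equals its full expansion
`∑ j, ⟪u ℓ, φ j⟫_H φ j`, so the projection residual is the tail `∑_{j ≥ r} ⟪u ℓ, φ j⟫_H φ j`.
Expanding its squared `V`-norm and averaging over `ℓ` produces the empirical correlations
`(1/(M+1)) ∑ ℓ ⟪u ℓ, φ j⟫_H ⟪u ℓ, φ k⟫_H`, and testing the eigenvalue equation `K φ k = λ k φ k`
against `φ j` shows that these equal `λ j δ_jk`.
-/

open Finset

section

variable {V H F κ α : Type*}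
  [NormedAddCommGroup V] [InnerProductSpace ℝ V]
  [NormedAddCommGroup H] [InnerProductSpace ℝ H]
  [FunLike F V H] [LinearMapClass F ℝ V H]

theorem eq_sum_inner_smul_of_mem_span [Fintype κ] {ι : F} {φ : κ → V}
    (hon : Orthonormal ℝ (fun j => ι (φ j))) {x : V}
    (hx : x ∈ Submodule.span ℝ (Set.range φ)) :
    x = ∑ j, ⟪ι x, ι (φ j)⟫ • φ j := by
  obtain ⟨a, rfl⟩ := (Submodule.mem_span_range_iff_exists_fun ℝ).mp hx
  refine sum_congr rfl fun j _ => ?_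
  simp only [map_sum, map_smul, hon.inner_left_fintype, conj_trivial]

theorem mul_sum_inner_mul_inner_eq_ite [Fintype α] [DecidableEq κ] {ι : F} {φ : κ → V}
    (hon : Orthonormal ℝ (fun j => ι (φ j))) {u : α → V} {a : ℝ} {lam : κ → ℝ}
    (hK : ∀ j, a • ∑ ℓ, ⟪ι (u ℓ), ι (φ j)⟫ • u ℓ = lam j • φ j) (j k : κ) :
    a * ∑ ℓ, ⟪ι (u ℓ), ι (φ j)⟫ * ⟪ι (u ℓ), ι (φ k)⟫ = if j = k then lam j else 0 := by
  have h := congrArg (fun x => ⟪ι x, ι (φ j)⟫) (hK k)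
  simp only [map_smul, map_sum, real_inner_smul_left, sum_inner,
    orthonormal_iff_ite.mp hon k j] at h
  rw [sum_congr rfl fun ℓ _ => mul_comm _ _, h]
  by_cases hjk : j = k
  · simp [hjk]
  · simp [hjk, Ne.symm hjk]

end

theorem norm_sq_sum_smul {E κ : Type*} [NormedAddCommGroup E] [InnerProductSpace ℝ E]
    (s : Finset κ) (c : κ → ℝ) (v : κ → E) :
    ‖∑ j ∈ s, c j • v j‖ ^ 2 = ∑ j ∈ s, ∑ k ∈ s, c j * c k * ⟪v j, v k⟫ := by
  rw [← real_inner_self_eq_norm_sq]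
  simp only [sum_inner, inner_sum, real_inner_smul_left, real_inner_smul_right, mul_assoc]
  exact sum_congr rfl fun j _ => sum_congr rfl fun k _ => by rw [real_inner_comm]

theorem mul_sum_norm_sq_sum_smul_of_coeff_correlation {E κ α : Type*}
    [NormedAddCommGroup E] [InnerProductSpace ℝ E] [Fintype α] [DecidableEq κ]
    (s : Finset κ) (c : α → κ → ℝ) (v : κ → E) {a : ℝ} {lam : κ → ℝ}
    (hc : ∀ j k, a * ∑ ℓ, c ℓ j * c ℓ k = if j = k then lam j else 0) :
    a * ∑ ℓ, ‖∑ j ∈ s, c ℓ j • v j‖ ^ 2 = ∑ j ∈ s, lam j * ‖v j‖ ^ 2 := by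
  calc a * ∑ ℓ, ‖∑ j ∈ s, c ℓ j • v j‖ ^ 2
      = ∑ j ∈ s, ∑ k ∈ s, (a * ∑ ℓ, c ℓ j * c ℓ k) * ⟪v j, v k⟫ := by
        simp only [norm_sq_sum_smul, mul_sum, sum_mul]
        rw [sum_comm]
        refine sum_congr rfl fun j _ => ?_
        rw [sum_comm]
        exact sum_congr rfl fun k _ => sum_congr rfl fun ℓ _ => by ring
    _ = ∑ j ∈ s, lam j * ‖v j‖ ^ 2 := by
        simp only [hc, ite_mul, zero_mul, sum_ite_eq, real_inner_self_eq_norm_sq]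
        exact sum_congr rfl fun j hj => if_pos hj

theorem pod_error_Vnorm_general {V H : Type*}
    [NormedAddCommGroup V] [InnerProductSpace ℝ V]
    [NormedAddCommGroup H] [InnerProductSpace ℝ H]
    (ι : V →L[ℝ] H)
    (M d r : ℕ)
    (u : Fin (M + 1) → V) (φ : Fin d → V) (lam : Fin d → ℝ)
    (hon : Orthonormal ℝ (fun j => ι (φ j)))
    (hspan : Submodule.span ℝ (Set.range φ) = Submodule.span ℝ (Set.range u))
    (hK : ∀ j : Fin d,
      (1 / (M + 1 : ℝ)) • ∑ ℓ : Fin (M + 1), ⟪ι (u ℓ), ι (φ j)⟫ • u ℓ = lam j • φ j) :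
    (1 / (M + 1 : ℝ)) * ∑ ℓ : Fin (M + 1),
        ‖u ℓ - ∑ j ∈ Finset.univ.filter (fun j : Fin d => (j : ℕ) < r),
            ⟪ι (u ℓ), ι (φ j)⟫ • φ j‖ ^ 2
      = ∑ j ∈ Finset.univ.filter (fun j : Fin d => r ≤ (j : ℕ)),
          lam j * ‖φ j‖ ^ 2 := by
  have hresidual : ∀ ℓ, u ℓ - ∑ j ∈ univ.filter (fun j : Fin d => (j : ℕ) < r),
      ⟪ι (u ℓ), ι (φ j)⟫ • φ j
        = ∑ j ∈ univ.filter (fun j : Fin d => r ≤ (j : ℕ)), ⟪ι (u ℓ), ι (φ j)⟫ • φ j := by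
    intro ℓ
    have hmem : u ℓ ∈ Submodule.span ℝ (Set.range φ) := hspan ▸ Submodule.subset_span ⟨ℓ, rfl⟩
    rw [sub_eq_iff_eq_add']
    simp_rw [← not_lt]
    rw [sum_filter_add_sum_filter_not]
    exact eq_sum_inner_smul_of_mem_span hon hmem
  simp only [hresidual]
  exact mul_sum_norm_sq_sum_smul_of_coeff_correlation _ _ _ (mul_sum_inner_mul_inner_eq_ite hon hK)

theorem pod_error_Vnorm {V H : Type*}
    [NormedAddCommGroup V] [InnerProductSpace ℝ V]
    [NormedAddCommGroup H] [InnerProductSpace ℝ H]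
    (ι : V →L[ℝ] H) (hι : Function.Injective ι)
    (M d r : ℕ) (hr : r ≤ d)
    (u : Fin (M + 1) → V) (φ : Fin d → V) (lam : Fin d → ℝ)
    (hon : Orthonormal ℝ (fun j => ι (φ j)))
    (hspan : Submodule.span ℝ (Set.range φ) = Submodule.span ℝ (Set.range u))
    (hK : ∀ j : Fin d,
      (1 / (M + 1 : ℝ)) • ∑ ℓ : Fin (M + 1), ⟪ι (u ℓ), ι (φ j)⟫ • u ℓ = lam j • φ j) :
    (1 / (M + 1 : ℝ)) * ∑ ℓ : Fin (M + 1),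
        ‖u ℓ - ∑ j ∈ Finset.univ.filter (fun j : Fin d => (j : ℕ) < r),
            ⟪ι (u ℓ), ι (φ j)⟫ • φ j‖ ^ 2
      = ∑ j ∈ Finset.univ.filter (fun j : Fin d => r ≤ (j : ℕ)),
          lam j * ‖φ j‖ ^ 2 :=
  pod_error_Vnorm_general ι M d r u φ lam hon hspan hK
end

section
/- Let φ_1, ..., φ_r be linearly independent elements of a real inner product space V that also carries a second inner product (from a space H). Let M_r be the r×r matrix with entries (M_r)_{jk} = ⟨φ_k, φ_j⟩_H and S_r the matrix with entries (S_r)_{jk} = ⟨φ_k, φ_j⟩_H + ⟨φ_k, φ_j⟩_V. Then for every v in span{φ_1,...,φ_r}, ‖v‖_H ≤ √(‖M_r‖₂ ‖S_r⁻¹‖₂) · (‖v‖_H² + ‖v‖_V²)^{1/2}. -/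
open scoped RealInnerProductSpace BigOperators

/-- Spectral (operator 2-) norm of a real square matrix. -/
noncomputable def specNorm {r : ℕ} (A : Matrix (Fin r) (Fin r) ℝ) : ℝ :=
  ‖(Matrix.toEuclideanLin A).toContinuousLinearMap‖

/-!
Write `v = ∑ k, c k • φ k`. Then `‖v‖_H² = cᵀ M c ≤ ‖M‖ |c|²` and `‖v‖_H² + ‖v‖_V² = cᵀ S c`.
Since `S` is the Gram matrix of a symmetric nonnegative form, Cauchy–Schwarz for that form,
applied to `S⁻¹ c` and `c`, gives `|c|⁴ ≤ (cᵀ S⁻¹ c) (cᵀ S c) ≤ ‖S⁻¹‖ |c|² cᵀ S c`,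
i.e. `|c|² ≤ ‖S⁻¹‖ cᵀ S c`.
-/

open Matrix

section GramMatrix

variable {ι M : Type*} [Fintype ι] [DecidableEq ι] [AddCommMonoid M] [Module ℝ M]

def bilinGram (B : M →ₗ[ℝ] M →ₗ[ℝ] ℝ) (φ : ι → M) : Matrix ι ι ℝ :=
  Matrix.of fun j k => B (φ k) (φ j)

theorem inner_toEuclideanLin_bilinGram (B : M →ₗ[ℝ] M →ₗ[ℝ] ℝ) (φ : ι → M)
    (x y : EuclideanSpace ℝ ι) :
    ⟪toEuclideanLin (bilinGram B φ) x, y⟫ = B (∑ k, x k • φ k) (∑ j, y j • φ j) := by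
  simp only [EuclideanSpace.inner_eq_star_dotProduct, toLpLin_apply, dotProduct, mulVec,
    bilinGram, of_apply, star_trivial, map_sum, map_smul, LinearMap.sum_apply,
    LinearMap.smul_apply, smul_eq_mul, Finset.mul_sum]
  exact Finset.sum_congr rfl fun _ _ => Finset.sum_congr rfl fun _ _ => by ring

theorem isPositive_toEuclideanLin_bilinGram {B : M →ₗ[ℝ] M →ₗ[ℝ] ℝ} (hB : B.IsPosSemidef)
    (φ : ι → M) : (toEuclideanLin (bilinGram B φ)).IsPositive := by
  refine (LinearMap.isPositive_iff _).2 ⟨fun x y => ?_, fun x => ?_⟩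
  · rw [← real_inner_comm x, inner_toEuclideanLin_bilinGram, inner_toEuclideanLin_bilinGram]
    exact hB.isSymm.eq _ _
  · rw [inner_toEuclideanLin_bilinGram]
    exact hB.isNonneg.nonneg _

end GramMatrix

theorem Matrix.leftInverse_toEuclideanLin_inv {𝕜 ι : Type*} [RCLike 𝕜] [Fintype ι]
    [DecidableEq ι] {A : Matrix ι ι 𝕜} (hA : IsUnit A) :
    Function.LeftInverse (toEuclideanLin A) (toEuclideanLin A⁻¹).toContinuousLinearMap :=
  fun y => by
    rw [LinearMap.coe_toContinuousLinearMap', ← LinearMap.comp_apply, ← toLpLin_mul,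
      mul_nonsing_inv _ ((isUnit_iff_isUnit_det A).mp hA), toLpLin_one, LinearMap.id_apply]

section PositiveOperator

variable {F : Type*} [NormedAddCommGroup F] [InnerProductSpace ℝ F]

theorem ContinuousLinearMap.real_inner_map_self_le (A : F →L[ℝ] F) (x : F) :
    ⟪A x, x⟫ ≤ ‖A‖ * ‖x‖ ^ 2 :=
  calc ⟪A x, x⟫ ≤ ‖A x‖ * ‖x‖ := real_inner_le_norm _ _
    _ ≤ ‖A‖ * ‖x‖ * ‖x‖ := by gcongr; exact A.le_opNorm x
    _ = ‖A‖ * ‖x‖ ^ 2 := by ring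

theorem LinearMap.IsPositive.inner_map_sq_le_mul {T : F →ₗ[ℝ] F} (hT : T.IsPositive) (x y : F) :
    ⟪T x, y⟫ ^ 2 ≤ ⟪T x, x⟫ * ⟪T y, y⟫ := by
  have hquad : ∀ t : ℝ, 0 ≤ ⟪T y, y⟫ * (t * t) + 2 * ⟪T x, y⟫ * t + ⟪T x, x⟫ := fun t => by
    have hsymm : ⟪T y, x⟫ = ⟪T x, y⟫ := by rw [hT.isSymmetric, real_inner_comm]
    have hnonneg := hT.inner_nonneg_left (x + t • y)
    simp only [map_add, map_smul, inner_add_left, inner_add_right, real_inner_smul_left,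
      real_inner_smul_right, hsymm] at hnonneg
    linarith
  have hdiscrim := discrim_le_zero hquad
  rw [discrim] at hdiscrim
  linarith

theorem LinearMap.IsPositive.norm_sq_le_opNorm_mul_inner {T : F →ₗ[ℝ] F} (hT : T.IsPositive)
    {S : F →L[ℝ] F} (hTS : Function.LeftInverse T S) (x : F) :
    ‖x‖ ^ 2 ≤ ‖S‖ * ⟪T x, x⟫ := by
  have hx : ‖x‖ ^ 2 = ⟪T (S x), x⟫ := by rw [hTS x, real_inner_self_eq_norm_sq]
  have hSx : ⟪T (S x), S x⟫ ≤ ‖S‖ * ‖x‖ ^ 2 := by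
    rw [hTS x, real_inner_comm]
    exact S.real_inner_map_self_le x
  have hcs := hT.inner_map_sq_le_mul (S x) x
  rw [← hx] at hcs
  have hTx := hT.inner_nonneg_left x
  have hmul : ‖x‖ ^ 2 * ‖x‖ ^ 2 ≤ ‖x‖ ^ 2 * (‖S‖ * ⟪T x, x⟫) := by nlinarith
  rcases (sq_nonneg ‖x‖).eq_or_lt with hzero | hpos
  · rw [← hzero]; positivity
  · exact le_of_mul_le_mul_left hmul hpos

end PositiveOperator

theorem pod_inverse_estimate_L2_general {E : Type*} [NormedAddCommGroup E] [InnerProductSpace ℝ E]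
    (a : E →ₗ[ℝ] E →ₗ[ℝ] ℝ) (hsymm : ∀ x y, a x y = a y x) (hpos : ∀ x, 0 ≤ a x x)
    (r : ℕ) (φ : Fin r → E)
    (Mr Sr : Matrix (Fin r) (Fin r) ℝ)
    (hM : ∀ j k, Mr j k = ⟪φ k, φ j⟫)
    (hS : ∀ j k, Sr j k = ⟪φ k, φ j⟫ + a (φ k) (φ j))
    (hSinv : IsUnit Sr) :
    ∀ v ∈ Submodule.span ℝ (Set.range φ),
      ‖v‖ ≤ Real.sqrt (specNorm Mr * specNorm Sr⁻¹) *
        Real.sqrt (‖v‖ ^ 2 + a v v) := by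
  intro v hv
  obtain ⟨c, hc⟩ := (Submodule.mem_span_range_iff_exists_fun ℝ).mp hv
  set x : EuclideanSpace ℝ (Fin r) := WithLp.toLp 2 c
  have hx : ∑ k, x k • φ k = v := hc
  have hvx : ‖v‖ ^ 2 ≤ specNorm Mr * ‖x‖ ^ 2 := by
    have hMr : bilinGram (innerₗ E) φ = Mr := Matrix.ext fun j k => (hM j k).symm
    have hquad := inner_toEuclideanLin_bilinGram (innerₗ E) φ x x
    rw [hMr, hx, innerₗ_apply_apply, real_inner_self_eq_norm_sq] at hquad
    exact hquad ▸ (toEuclideanLin Mr).toContinuousLinearMap.real_inner_map_self_le x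
  have hxv : ‖x‖ ^ 2 ≤ specNorm Sr⁻¹ * (‖v‖ ^ 2 + a v v) := by
    have hSr : bilinGram (innerₗ E + a) φ = Sr := Matrix.ext fun j k => (hS j k).symm
    have hquad := inner_toEuclideanLin_bilinGram (innerₗ E + a) φ x x
    rw [hSr, hx, LinearMap.add_apply, LinearMap.add_apply, innerₗ_apply_apply,
      real_inner_self_eq_norm_sq] at hquad
    have hSpos : (toEuclideanLin Sr).IsPositive :=
      hSr ▸ isPositive_toEuclideanLin_bilinGram (isPosSemidef_inner.add ⟨⟨hsymm⟩, ⟨hpos⟩⟩) φ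
    exact hquad ▸ hSpos.norm_sq_le_opNorm_mul_inner (leftInverse_toEuclideanLin_inv hSinv) x
  have hMnorm : 0 ≤ specNorm Mr := norm_nonneg _
  have hSnorm : 0 ≤ specNorm Sr⁻¹ := norm_nonneg _
  have hQ : 0 ≤ ‖v‖ ^ 2 + a v v := add_nonneg (sq_nonneg _) (hpos v)
  rw [← Real.sqrt_mul (mul_nonneg hMnorm hSnorm),
    Real.le_sqrt (norm_nonneg _) (mul_nonneg (mul_nonneg hMnorm hSnorm) hQ), mul_assoc]
  exact hvx.trans (mul_le_mul_of_nonneg_left hxv hMnorm)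

theorem pod_inverse_estimate_L2 {E : Type*} [NormedAddCommGroup E] [InnerProductSpace ℝ E]
    (a : E →ₗ[ℝ] E →ₗ[ℝ] ℝ) (hsymm : ∀ x y, a x y = a y x) (hpos : ∀ x, 0 ≤ a x x)
    (r : ℕ) (φ : Fin r → E) (hli : LinearIndependent ℝ φ)
    (Mr Sr : Matrix (Fin r) (Fin r) ℝ)
    (hM : ∀ j k, Mr j k = ⟪φ k, φ j⟫)
    (hS : ∀ j k, Sr j k = ⟪φ k, φ j⟫ + a (φ k) (φ j))
    (hSinv : IsUnit Sr) :
    ∀ v ∈ Submodule.span ℝ (Set.range φ),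
      ‖v‖ ≤ Real.sqrt (specNorm Mr * specNorm Sr⁻¹) *
        Real.sqrt (‖v‖ ^ 2 + a v v) :=
  pod_inverse_estimate_L2_general a hsymm hpos r φ Mr Sr hM hS hSinv
end

section
/- Let X be a real Hilbert space with two inner products a(·,·) (symmetric, coercive: a(v,v) ≥ 0) and (·,·) (the L² inner product with norm ‖·‖), and let b* : X³ → ℝ be trilinear with b*(u,v,v) = 0. Let ν, Δt, α > 0 and P'_R a bounded linear operator. Suppose (u_r^k)_{k=0}^{M} ⊂ X satisfies, for all k and all φ ∈ X_r (a finite-dimensional subspace containing each u_r^k): ((u_r^{k+1} − u_r^k)/Δt, φ) + ν (∇u_r^{k+1}, ∇φ) + b*(u_r^{k+1}, u_r^{k+1}, φ) + α (P'_R ∇u_r^{k+1}, P'_R ∇φ) = (f^{k+1}, φ). Then ‖u_r^M‖² + ν Δt Σ_{k=0}^{M−1} ‖∇u_r^{k+1}‖² ≤ ‖u_r^0‖² + (Δt/ν) Σ_{k=0}^{M−1} ‖f^{k+1}‖_{−1}², where ‖f‖_{−1} = sup_{0≠v∈X} (f,v)/‖∇v‖. -/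
/-!
Test the scheme with `φ = u^{k+1}`: the trilinear term vanishes, the VMS term is nonnegative, and
`2 (u^{k+1} - u^k, u^{k+1}) ≥ ‖u^{k+1}‖² - ‖u^k‖²`. Bounding the forcing by the dual norm and
Young's inequality absorbs half of the viscous term, which gives a one-step energy inequality;
summing it over `k` telescopes.
-/

open scoped RealInnerProductSpace BigOperators

open Finset

section DualNorm

variable {X Y : Type*} [NormedAddCommGroup X] [InnerProductSpace ℝ X] [SeminormedAddGroup Y]

/-- The `H⁻¹`-type norm of `f` relative to `G`. As a real `⨆` it is `0` when the quotients are
unbounded; they are bounded as soon as `G` is bounded below. -/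
noncomputable def dualNorm (G : X → Y) (f : X) : ℝ :=
  ⨆ v : X, ⟪f, v⟫ / ‖G v‖

variable {G : X → Y} {c : ℝ}

lemma bddAbove_range_inner_div_norm (hc : 0 < c) (hG : ∀ v, c * ‖v‖ ≤ ‖G v‖) (f : X) :
    BddAbove (Set.range fun v : X => ⟪f, v⟫ / ‖G v‖) := by
  refine ⟨‖f‖ / c, ?_⟩
  rintro _ ⟨v, rfl⟩
  rcases eq_or_ne v 0 with rfl | hv
  · simp [div_nonneg (norm_nonneg _) hc.le]
  · have hGv : 0 < ‖G v‖ := (mul_pos hc (norm_pos_iff.mpr hv)).trans_le (hG v)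
    rw [div_le_div_iff₀ hGv hc]
    calc ⟪f, v⟫ * c ≤ ‖f‖ * ‖v‖ * c := by gcongr; exact real_inner_le_norm f v
      _ = ‖f‖ * (c * ‖v‖) := by ring
      _ ≤ ‖f‖ * ‖G v‖ := by gcongr; exact hG v

lemma inner_le_dualNorm_mul (hc : 0 < c) (hG : ∀ v, c * ‖v‖ ≤ ‖G v‖) (f v : X) :
    ⟪f, v⟫ ≤ dualNorm G f * ‖G v‖ := by
  rcases eq_or_ne v 0 with rfl | hv
  · have h0 := le_ciSup (bddAbove_range_inner_div_norm hc hG f) 0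
    simp only [inner_zero_right, zero_div] at h0 ⊢
    exact mul_nonneg h0 (norm_nonneg _)
  · have hGv : 0 < ‖G v‖ := (mul_pos hc (norm_pos_iff.mpr hv)).trans_le (hG v)
    exact (div_le_iff₀ hGv).mp (le_ciSup (bddAbove_range_inner_div_norm hc hG f) v)

end DualNorm

lemma norm_sq_sub_norm_sq_le_two_mul_inner {X : Type*} [NormedAddCommGroup X]
    [InnerProductSpace ℝ X] (x y : X) : ‖x‖ ^ 2 - ‖y‖ ^ 2 ≤ 2 * ⟪x - y, x⟫ := by
  have h := norm_sub_sq_real x y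
  rw [inner_sub_left, real_inner_self_eq_norm_sq, real_inner_comm]
  nlinarith [sq_nonneg ‖x - y‖]

lemma two_mul_mul_sub_mul_sq_le_sq_div {ν : ℝ} (hν : 0 < ν) (s g : ℝ) :
    2 * s * g - ν * g ^ 2 ≤ s ^ 2 / ν := by
  rw [le_div_iff₀ hν]
  nlinarith [sq_nonneg (s - ν * g)]

lemma backwardEuler_energy_step {X : Type*} [NormedAddCommGroup X] [InnerProductSpace ℝ X]
    {u u' f : X} {s g r ν Δt : ℝ} (hν : 0 < ν) (hΔt : 0 < Δt) (hr : 0 ≤ r)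
    (hf : ⟪f, u'⟫ ≤ s * g)
    (heq : ⟪Δt⁻¹ • (u' - u), u'⟫ + ν * g ^ 2 + r = ⟪f, u'⟫) :
    ‖u'‖ ^ 2 + ν * Δt * g ^ 2 ≤ ‖u‖ ^ 2 + Δt / ν * s ^ 2 := by
  have hstep : ⟪u' - u, u'⟫ = Δt * (⟪f, u'⟫ - ν * g ^ 2 - r) := by
    rw [real_inner_smul_left] at heq
    rw [← heq]
    field_simp
    ring
  have henergy := norm_sq_sub_norm_sq_le_two_mul_inner u' u
  have hyoung := mul_le_mul_of_nonneg_left (two_mul_mul_sub_mul_sq_le_sq_div hν s g) hΔt.le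
  have hforce := mul_le_mul_of_nonneg_left hf hΔt.le
  have hdiss := mul_nonneg hΔt.le hr
  rw [mul_div_assoc'] at hyoung
  rw [div_mul_eq_mul_div]
  nlinarith

lemma add_sum_range_le_add_sum_range {α : Type*} [AddCommMonoid α] [PartialOrder α]
    [IsOrderedAddMonoid α] {a d e : ℕ → α} {M : ℕ}
    (h : ∀ k < M, a (k + 1) + d k ≤ a k + e k) :
    a M + ∑ k ∈ range M, d k ≤ a 0 + ∑ k ∈ range M, e k := by
  induction M with
  | zero => simp
  | succ M ih =>
    calc a (M + 1) + ∑ k ∈ range (M + 1), d k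
        = (a (M + 1) + d M) + ∑ k ∈ range M, d k := by rw [sum_range_succ]; abel
      _ ≤ (a M + e M) + ∑ k ∈ range M, d k := add_le_add_left (h M M.lt_succ_self) _
      _ = (a M + ∑ k ∈ range M, d k) + e M := by abel
      _ ≤ (a 0 + ∑ k ∈ range M, e k) + e M :=
          add_le_add_left (ih fun k hk => h k (hk.trans M.lt_succ_self)) _
      _ = a 0 + ∑ k ∈ range (M + 1), e k := by rw [sum_range_succ, add_assoc]

theorem vms_pod_rom_stability_general {X Y : Type*}
    [NormedAddCommGroup X] [InnerProductSpace ℝ X]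
    [NormedAddCommGroup Y] [InnerProductSpace ℝ Y]
    (G : X →L[ℝ] Y) (c : ℝ) (hc : 0 < c) (hG : ∀ v, c * ‖v‖ ≤ ‖G v‖)
    (P : Y →L[ℝ] Y)
    (b : X → X → X → ℝ) (hb : ∀ u v, b u v v = 0)
    (ν Δt α : ℝ) (hν : 0 < ν) (hΔt : 0 < Δt) (hα : 0 < α)
    (M : ℕ) (Xr : Submodule ℝ X)
    (u f : ℕ → X)
    (hu : ∀ k ≤ M, u k ∈ Xr)
    (heq : ∀ k < M, ∀ φ ∈ Xr,
      ⟪Δt⁻¹ • (u (k + 1) - u k), φ⟫ + ν * ⟪G (u (k + 1)), G φ⟫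
        + b (u (k + 1)) (u (k + 1)) φ
        + α * ⟪P (G (u (k + 1))), P (G φ)⟫
      = ⟪f (k + 1), φ⟫) :
    ‖u M‖ ^ 2 + ν * Δt * ∑ k ∈ Finset.range M, ‖G (u (k + 1))‖ ^ 2
      ≤ ‖u 0‖ ^ 2 + (Δt / ν) * ∑ k ∈ Finset.range M,
          (⨆ v : X, ⟪f (k + 1), v⟫ / ‖G v‖) ^ 2 := by
  rw [mul_sum, mul_sum]
  refine add_sum_range_le_add_sum_range (a := fun k => ‖u k‖ ^ 2) fun k hk => ?_
  have hk' := heq k hk (u (k + 1)) (hu (k + 1) hk)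
  rw [hb, add_zero, real_inner_self_eq_norm_sq] at hk'
  exact backwardEuler_energy_step hν hΔt
    (mul_nonneg hα.le real_inner_self_nonneg)
    (inner_le_dualNorm_mul hc hG (f (k + 1)) (u (k + 1))) hk'

theorem vms_pod_rom_stability {X Y : Type*}
    [NormedAddCommGroup X] [InnerProductSpace ℝ X]
    [NormedAddCommGroup Y] [InnerProductSpace ℝ Y]
    (G : X →L[ℝ] Y) (c : ℝ) (hc : 0 < c) (hG : ∀ v, c * ‖v‖ ≤ ‖G v‖)
    (P : Y →L[ℝ] Y)
    (b : X → X → X → ℝ) (hb : ∀ u v, b u v v = 0)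
    (ν Δt α : ℝ) (hν : 0 < ν) (hΔt : 0 < Δt) (hα : 0 < α)
    (M : ℕ) (Xr : Submodule ℝ X) [FiniteDimensional ℝ Xr]
    (u f : ℕ → X)
    (hu : ∀ k ≤ M, u k ∈ Xr)
    (heq : ∀ k < M, ∀ φ ∈ Xr,
      ⟪Δt⁻¹ • (u (k + 1) - u k), φ⟫ + ν * ⟪G (u (k + 1)), G φ⟫
        + b (u (k + 1)) (u (k + 1)) φ
        + α * ⟪P (G (u (k + 1))), P (G φ)⟫
      = ⟪f (k + 1), φ⟫) :
    ‖u M‖ ^ 2 + ν * Δt * ∑ k ∈ Finset.range M, ‖G (u (k + 1))‖ ^ 2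
      ≤ ‖u 0‖ ^ 2 + (Δt / ν) * ∑ k ∈ Finset.range M,
          (⨆ v : X, ⟪f (k + 1), v⟫ / ‖G v‖) ^ 2 :=
  vms_pod_rom_stability_general G c hc hG P b hb ν Δt α hν hΔt hα M Xr u f hu heq
end
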